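/- With f(x) = e^{−x²/2} / ∫_x^∞ e^{−t²/2} dt, one has lim_{x → ∞} (x − f(x)) = 0. -/

import Mathlib

open Real MeasureTheory Filter

section Aux

open Set

private lemma gauss_integrable : Integrable (fun t : ℝ => Real.exp (-t ^ 2 / 2)) := by
  have h := integrable_exp_neg_mul_sq (show (0:ℝ) < 1/2 by norm_num)
  have : (fun t : ℝ => Real.exp (-t ^ 2 / 2)) = fun t : ℝ => Real.exp (-(1/2) * t ^ 2) := by
    funext t; congr 1; ring
  rw [this]; exact h

private lemma deriv_inner (t : ℝ) : HasDerivAt (fun u : ℝ => -u ^ 2 / 2) (-t) t := by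
  have h := ((hasDerivAt_pow 2 t).neg).div_const 2
  refine h.congr_deriv ?_
  simp; ring

private lemma deriv_gauss (t : ℝ) :
    HasDerivAt (fun u : ℝ => Real.exp (-u ^ 2 / 2)) (Real.exp (-t ^ 2 / 2) * (-t)) t :=
  (deriv_inner t).exp

private lemma tendsto_neg_gauss :
    Tendsto (fun u : ℝ => Real.exp (-u ^ 2 / 2)) atTop (nhds 0) := by
  apply Real.tendsto_exp_atBot.comp
  have h1 : Tendsto (fun u : ℝ => u ^ 2) atTop atTop := tendsto_pow_atTop two_ne_zero
  have h2 : Tendsto (fun u : ℝ => -u ^ 2) atTop atBot := tendsto_neg_atBot_iff.mpr h1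
  exact h2.atBot_div_const (by norm_num)

private lemma gauss_tail_upper {x : ℝ} (hx : 0 < x) :
    (∫ t in Ioi x, Real.exp (-t ^ 2 / 2)) ≤ Real.exp (-x ^ 2 / 2) / x := by
  have hderiv : ∀ t ∈ Ioi x, HasDerivAt (fun u : ℝ => -Real.exp (-u ^ 2 / 2))
      (t * Real.exp (-t ^ 2 / 2)) t := by
    intro t _
    have := (deriv_gauss t).neg
    refine this.congr_deriv ?_; ring
  have hcont : ContinuousOn (fun u : ℝ => -Real.exp (-u ^ 2 / 2)) (Ici x) := by
    fun_prop
  have hnonneg : ∀ t ∈ Ioi x, 0 ≤ t * Real.exp (-t ^ 2 / 2) := fun t ht =>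
    mul_nonneg (le_of_lt (hx.trans ht)) (Real.exp_nonneg _)
  have htend : Tendsto (fun u : ℝ => -Real.exp (-u ^ 2 / 2)) atTop (nhds 0) := by
    have := tendsto_neg_gauss.neg; simpa using this
  have hint : ∫ t in Ioi x, t * Real.exp (-t ^ 2 / 2)
      = 0 - (-Real.exp (-x ^ 2 / 2)) :=
    integral_Ioi_of_hasDerivAt_of_nonneg (hcont x Set.self_mem_Ici) hderiv hnonneg htend
  have hintegrable : IntegrableOn (fun t => t * Real.exp (-t ^ 2 / 2)) (Ioi x) :=
    integrableOn_Ioi_deriv_of_nonneg (hcont x Set.self_mem_Ici) hderiv hnonneg htend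
  have hmono : (∫ t in Ioi x, Real.exp (-t ^ 2 / 2))
      ≤ ∫ t in Ioi x, (t / x) * Real.exp (-t ^ 2 / 2) := by
    apply setIntegral_mono_on gauss_integrable.integrableOn
      (by simpa [IntegrableOn, mul_div_assoc, div_mul_eq_mul_div] using hintegrable.div_const x)
      measurableSet_Ioi
    intro t ht
    have h1 : (1:ℝ) ≤ t / x := (le_div_iff₀ hx).mpr (by simpa using (le_of_lt ht))
    nlinarith [Real.exp_pos (-t ^ 2 / 2)]
  calc (∫ t in Ioi x, Real.exp (-t ^ 2 / 2))
      ≤ ∫ t in Ioi x, (t / x) * Real.exp (-t ^ 2 / 2) := hmono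
    _ = (∫ t in Ioi x, t * Real.exp (-t ^ 2 / 2)) / x := by
        rw [← integral_div]; congr 1; funext t; ring
    _ = Real.exp (-x ^ 2 / 2) / x := by rw [hint]; ring_nf

private lemma gauss_tail_lower {x : ℝ} (hx : 1 ≤ x) :
    x / (x ^ 2 + 1) * Real.exp (-x ^ 2 / 2) ≤ ∫ t in Ioi x, Real.exp (-t ^ 2 / 2) := by
  set g : ℝ → ℝ := fun u => -(u / (u ^ 2 + 1) * Real.exp (-u ^ 2 / 2)) with hg
  set D : ℝ → ℝ := fun t => (1 - 2 / (t ^ 2 + 1) ^ 2) * Real.exp (-t ^ 2 / 2) with hD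
  have hpos : ∀ t : ℝ, (0:ℝ) < t ^ 2 + 1 := fun t => by positivity
  have hderiv : ∀ t ∈ Ioi x, HasDerivAt g (D t) t := by
    intro t _
    have h1 : HasDerivAt (fun u : ℝ => u / (u ^ 2 + 1))
        ((1 * (t ^ 2 + 1) - t * (2 * t)) / (t ^ 2 + 1) ^ 2) t := by
      have ha : HasDerivAt (fun u : ℝ => u) 1 t := hasDerivAt_id t
      have hb : HasDerivAt (fun u : ℝ => u ^ 2 + 1) (2 * t) t := by
        have := (hasDerivAt_pow 2 t).add_const 1
        refine this.congr_deriv ?_; norm_num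
      exact ha.div hb (ne_of_gt (hpos t))
    have h2 := (h1.mul (deriv_gauss t)).neg
    refine h2.congr_deriv ?_
    have h3 := ne_of_gt (hpos t)
    rw [hD]
    field_simp
    ring
  have hcont : ContinuousOn g (Ici x) := by
    apply ContinuousOn.neg
    apply ContinuousOn.mul
    · exact (continuousOn_id.div (by fun_prop) (fun t _ => ne_of_gt (hpos t)))
    · fun_prop
  have hnonneg : ∀ t ∈ Ioi x, 0 ≤ D t := by
    intro t ht
    have ht1 : (1:ℝ) < t := lt_of_le_of_lt hx ht
    have h4' : (2:ℝ) ≤ t ^ 2 + 1 := by nlinarith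
    have h4 : (4:ℝ) ≤ (t ^ 2 + 1) ^ 2 := by nlinarith
    have h5 : 2 / (t ^ 2 + 1) ^ 2 ≤ 2 / 4 :=
      div_le_div_of_nonneg_left (by norm_num) (by norm_num) h4
    have h6 : (0:ℝ) ≤ 1 - 2 / (t ^ 2 + 1) ^ 2 := by linarith
    exact mul_nonneg h6 (Real.exp_nonneg _)
  have htend : Tendsto g atTop (nhds 0) := by
    have hpos' : Tendsto (fun u : ℝ => u / (u ^ 2 + 1) * Real.exp (-u ^ 2 / 2))
        atTop (nhds 0) := by
      apply squeeze_zero' ?_ ?_ tendsto_neg_gauss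
      · filter_upwards [eventually_ge_atTop (0:ℝ)] with u hu
        exact mul_nonneg (div_nonneg hu (le_of_lt (hpos u))) (Real.exp_nonneg _)
      · filter_upwards [eventually_ge_atTop (0:ℝ)] with u hu
        have h7 : u / (u ^ 2 + 1) ≤ 1 := by
          rw [div_le_one (hpos u)]; nlinarith
        nlinarith [Real.exp_pos (-u ^ 2 / 2),
          div_nonneg hu (le_of_lt (hpos u))]
    have := hpos'.neg
    simpa using this
  have hint : ∫ t in Ioi x, D t = 0 - g x :=
    integral_Ioi_of_hasDerivAt_of_nonneg (hcont x Set.self_mem_Ici) hderiv hnonneg htend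
  have hmono : (∫ t in Ioi x, D t) ≤ ∫ t in Ioi x, Real.exp (-t ^ 2 / 2) := by
    apply setIntegral_mono_on
      (integrableOn_Ioi_deriv_of_nonneg (hcont x Set.self_mem_Ici) hderiv hnonneg htend)
      gauss_integrable.integrableOn measurableSet_Ioi
    intro t _
    have h8 : (0:ℝ) ≤ 2 / (t ^ 2 + 1) ^ 2 := by positivity
    rw [hD]
    nlinarith [Real.exp_pos (-t ^ 2 / 2)]
  have : x / (x ^ 2 + 1) * Real.exp (-x ^ 2 / 2) = 0 - g x := by rw [hg]; ring
  rw [this, ← hint]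
  exact hmono

end Aux

/-- With `f(x) = e^{−x²/2} / ∫_x^∞ e^{−t²/2} dt`, one has `x − f(x) → 0` as `x → ∞`
(Proposition 5 (ii), limit part). -/
theorem sub_inverse_mills_ratio_tendsto_zero :
    Tendsto (fun x : ℝ =>
      x - Real.exp (-x ^ 2 / 2) / ∫ t in Set.Ici x, Real.exp (-t ^ 2 / 2))
      atTop (nhds 0) := by
  have hlim1 : Tendsto (fun x : ℝ => -(1 / x)) atTop (nhds 0) := by
    have := tendsto_one_div_atTop_nhds_zero_nat (𝕜 := ℝ)
    have h := (tendsto_inv_atTop_zero (𝕜 := ℝ)).neg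
    simpa [one_div] using h
  apply tendsto_of_tendsto_of_tendsto_of_le_of_le' hlim1 tendsto_const_nhds
  · -- lower bound : -(1/x) ≤ x - f x
    filter_upwards [eventually_ge_atTop (1:ℝ)] with x hx
    have hx0 : (0:ℝ) < x := lt_of_lt_of_le one_pos hx
    rw [MeasureTheory.integral_Ici_eq_integral_Ioi]
    set Q := ∫ t in Set.Ioi x, Real.exp (-t ^ 2 / 2) with hQ
    have hlow := gauss_tail_lower hx
    have hQpos : 0 < Q := lt_of_lt_of_le (by positivity) hlow
    have hf : Real.exp (-x ^ 2 / 2) / Q ≤ x + 1 / x := by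
      rw [div_le_iff₀ hQpos]
      calc Real.exp (-x ^ 2 / 2)
          = (x + 1 / x) * (x / (x ^ 2 + 1) * Real.exp (-x ^ 2 / 2)) := by
            field_simp
        _ ≤ (x + 1 / x) * Q := by
            apply mul_le_mul_of_nonneg_left hlow
            positivity
    linarith
  · -- upper bound : x - f x ≤ 0
    filter_upwards [eventually_ge_atTop (1:ℝ)] with x hx
    have hx0 : (0:ℝ) < x := lt_of_lt_of_le one_pos hx
    rw [MeasureTheory.integral_Ici_eq_integral_Ioi]
    set Q := ∫ t in Set.Ioi x, Real.exp (-t ^ 2 / 2) with hQ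
    have hlow := gauss_tail_lower hx
    have hQpos : 0 < Q := lt_of_lt_of_le (by positivity) hlow
    have hup := gauss_tail_upper hx0
    have hf : x ≤ Real.exp (-x ^ 2 / 2) / Q := by
      rw [le_div_iff₀ hQpos]
      calc x * Q ≤ x * (Real.exp (-x ^ 2 / 2) / x) :=
            mul_le_mul_of_nonneg_left hup (le_of_lt hx0)
        _ = Real.exp (-x ^ 2 / 2) := by field_simp
    linarith
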